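/- arXiv:2312.00933 — 4 statements merged into one kernel-verified Lean document; each statement's English description precedes it below -/
import Mathlib

section
/- For any K probability distributions on a finite alphabet X, the Hellinger diameter satisfies 0 ≤ d(p_1,...,p_K) ≤ K(K−1) − ⌊K/|X|⌋·(K − |X| + (K mod |X|)). -/
open Finset

/-- Replacing a nonneg unit-ℓ² vector by a point mass at the argmin of the
background `s` does not increase `∑ (s+·)²`. -/
lemma replace_lemma {X : Type*} [Fintype X] [DecidableEq X] [Nonempty X] (s v : X → ℝ)
    (hs : ∀ x, 0 ≤ s x) (hv : ∀ x, 0 ≤ v x) (hv1 : ∑ x, (v x)^2 = 1) :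
    ∃ x0 : X, ∑ x, (s x + (if x = x0 then (1:ℝ) else 0))^2 ≤ ∑ x, (s x + v x)^2 := by
  obtain ⟨x0, -, hx0⟩ := Finset.exists_min_image Finset.univ s ⟨Classical.arbitrary X, Finset.mem_univ _⟩
  refine ⟨x0, ?_⟩
  have expand : ∀ u : X → ℝ, ∑ x, (s x + u x)^2
      = ∑ x, (s x)^2 + (2 * ∑ x, s x * u x + ∑ x, (u x)^2) := by
    intro u
    rw [Finset.mul_sum, ← Finset.sum_add_distrib, ← Finset.sum_add_distrib]
    exact Finset.sum_congr rfl fun x _ => by ring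
  rw [expand, expand]
  have h1 : ∑ x, s x * (if x = x0 then (1:ℝ) else 0) = s x0 := by
    simp [mul_ite]
  have h2 : ∑ x, (if x = x0 then (1:ℝ) else 0)^2 = 1 := by
    simp [ite_pow]
  have hvsum : (1:ℝ) ≤ ∑ x, v x := by
    have h3 : ∑ x, (v x)^2 ≤ (∑ x, v x)^2 :=
      Finset.sum_sq_le_sq_sum_of_nonneg (fun x _ => hv x)
    have h4 : 0 ≤ ∑ x, v x := Finset.sum_nonneg fun x _ => hv x
    nlinarith
  have h5 : s x0 ≤ ∑ x, s x * v x := by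
    calc s x0 = s x0 * 1 := by ring
    _ ≤ s x0 * ∑ x, v x := by
        exact mul_le_mul_of_nonneg_left hvsum (hs x0)
    _ = ∑ x, s x0 * v x := by rw [Finset.mul_sum]
    _ ≤ ∑ x, s x * v x :=
        Finset.sum_le_sum fun x _ => mul_le_mul_of_nonneg_right (hx0 x (Finset.mem_univ x)) (hv x)
  rw [h1, h2, hv1]
  linarith

/-- Any family of nonneg unit-ℓ² vectors can be replaced by integer point masses
without increasing `∑ (s + ∑·)²`. -/
lemma point_mass_lemma {X : Type*} [Fintype X] [DecidableEq X] [Nonempty X] :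
    ∀ (L : ℕ) (s : X → ℝ), (∀ x, 0 ≤ s x) →
    ∀ v : Fin L → X → ℝ, (∀ k x, 0 ≤ v k x) → (∀ k, ∑ x, (v k x)^2 = 1) →
    ∃ m : X → ℕ, (∑ x, m x = L) ∧
      ∑ x, (s x + (m x : ℝ))^2 ≤ ∑ x, (s x + ∑ k, v k x)^2 := by
  intro L
  induction L with
  | zero =>
      intro s hs v hv hv1
      exact ⟨fun _ => 0, by simp, by simp⟩
  | succ L ih =>
      intro s hs v hv hv1
      set s' : X → ℝ := fun x => s x + ∑ k : Fin L, v k.castSucc x with hs'def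
      have hs' : ∀ x, 0 ≤ s' x := fun x =>
        add_nonneg (hs x) (Finset.sum_nonneg fun k _ => hv _ x)
      obtain ⟨x0, hx0⟩ := replace_lemma s' (v (Fin.last L)) hs' (hv _) (hv1 _)
      set s'' : X → ℝ := fun x => s x + (if x = x0 then (1:ℝ) else 0) with hs''def
      have hs'' : ∀ x, 0 ≤ s'' x := fun x =>
        add_nonneg (hs x) (by by_cases h : x = x0 <;> simp [h])
      obtain ⟨m', hm'sum, hm'le⟩ := ih s'' hs'' (fun k => v k.castSucc)
        (fun k x => hv _ x) (fun k => hv1 _)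
      refine ⟨fun x => m' x + (if x = x0 then 1 else 0), ?_, ?_⟩
      · rw [Finset.sum_add_distrib, hm'sum]
        simp
      · have e1 : ∑ x, (s x + ((m' x + (if x = x0 then 1 else 0) : ℕ) : ℝ))^2
            = ∑ x, (s'' x + (m' x : ℝ))^2 := by
          refine Finset.sum_congr rfl fun x _ => ?_
          simp only [hs''def]
          by_cases h : x = x0 <;> simp [h] <;> push_cast <;> ring
        have e2 : ∑ x, (s'' x + ∑ k : Fin L, v k.castSucc x)^2
            = ∑ x, (s' x + (if x = x0 then (1:ℝ) else 0))^2 := by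
          refine Finset.sum_congr rfl fun x _ => ?_
          simp only [hs''def, hs'def]; ring
        have e3 : ∑ x, (s' x + v (Fin.last L) x)^2
            = ∑ x, (s x + ∑ k : Fin (L+1), v k x)^2 := by
          refine Finset.sum_congr rfl fun x _ => ?_
          rw [Fin.sum_univ_castSucc]
          simp only [hs'def]; ring
        rw [e1, ← e3]
        calc ∑ x, (s'' x + (m' x : ℝ))^2
            ≤ ∑ x, (s'' x + ∑ k : Fin L, v k.castSucc x)^2 := hm'le
          _ = ∑ x, (s' x + (if x = x0 then (1:ℝ) else 0))^2 := e2
          _ ≤ ∑ x, (s' x + v (Fin.last L) x)^2 := hx0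

/-- Integer convexity bound. -/
lemma count_lemma {X : Type*} [Fintype X] (K : ℕ) (m : X → ℕ) (hm : ∑ x, m x = K) :
    (Fintype.card X : ℝ) * ((K / Fintype.card X : ℕ) : ℝ)^2
      + (2 * ((K / Fintype.card X : ℕ) : ℝ) + 1) * ((K % Fintype.card X : ℕ) : ℝ)
    ≤ ∑ x, ((m x : ℝ))^2 := by
  set n := Fintype.card X with hn
  set q := K / n with hq
  set r := K % n with hr
  have key : ∀ x : X, (q:ℝ)^2 + (2*(q:ℝ)+1)*((m x : ℝ) - q) ≤ (m x : ℝ)^2 := by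
    intro x
    have h : (0:ℝ) ≤ ((m x : ℝ) - q) * ((m x : ℝ) - q - 1) := by
      rcases le_or_gt (m x) q with h | h
      · have h1 : (m x : ℝ) ≤ q := by exact_mod_cast h
        nlinarith
      · have h1 : (q:ℝ) + 1 ≤ (m x : ℝ) := by exact_mod_cast h
        nlinarith
    nlinarith
  have hsum : ∑ x, ((q:ℝ)^2 + (2*(q:ℝ)+1)*((m x : ℝ) - q)) ≤ ∑ x, ((m x : ℝ))^2 :=
    Finset.sum_le_sum fun x _ => key x
  have hc : (Finset.univ : Finset X).card = n := by simp [hn]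
  have hmc : ∑ x, ((m x : ℝ)) = (K : ℝ) := by
    rw [← hm]; push_cast; rfl
  have hdm : (n:ℝ) * (q:ℝ) + (r:ℝ) = (K:ℝ) := by
    exact_mod_cast Nat.div_add_mod K n
  have expand : ∑ x, ((q:ℝ)^2 + (2*(q:ℝ)+1)*((m x : ℝ) - q))
      = (n:ℝ)*(q:ℝ)^2 + (2*(q:ℝ)+1)*((K:ℝ) - n*q) := by
    rw [Finset.sum_add_distrib, Finset.sum_const, hc]
    rw [← Finset.mul_sum, Finset.sum_sub_distrib, hmc, Finset.sum_const, hc]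
    push_cast
    ring
  rw [expand] at hsum
  nlinarith [hsum, hdm]

/-- The Hellinger diameter of any `K` probability distributions on a finite alphabet `X`
satisfies `0 ≤ d ≤ K(K−1) − ⌊K/|X|⌋·(K − |X| + (K mod |X|))`, where
`d = K² − ∑_x (∑_k √(p_k x))²`. -/
theorem stmt2 {X : Type*} [Fintype X] (K : ℕ) (p : Fin K → X → ℝ)
    (hnn : ∀ k x, 0 ≤ p k x) (hsum : ∀ k, ∑ x, p k x = 1) :
    0 ≤ (K : ℝ)^2 - ∑ x, (∑ k, Real.sqrt (p k x))^2 ∧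
    (K : ℝ)^2 - ∑ x, (∑ k, Real.sqrt (p k x))^2
      ≤ (K : ℝ) * ((K : ℝ) - 1)
        - ((K / Fintype.card X : ℕ) : ℝ) *
            ((K : ℝ) - (Fintype.card X : ℝ) + ((K % Fintype.card X : ℕ) : ℝ)) := by
  classical
  have hsq : ∀ k x, (Real.sqrt (p k x))^2 = p k x := fun k x => Real.sq_sqrt (hnn k x)
  constructor
  · -- lower bound: Cauchy-Schwarz per x
    have hx : ∀ x : X, (∑ k, Real.sqrt (p k x))^2 ≤ (K:ℝ) * ∑ k, p k x := by
      intro x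
      have := Finset.sum_mul_sq_le_sq_mul_sq Finset.univ (fun _ : Fin K => (1:ℝ))
        (fun k => Real.sqrt (p k x))
      simp only [one_mul, one_pow] at this
      calc (∑ k, Real.sqrt (p k x))^2 ≤ (∑ _k : Fin K, (1:ℝ)) * ∑ k, (Real.sqrt (p k x))^2 := this
        _ = (K:ℝ) * ∑ k, p k x := by
            simp [hsq]
    have h2 : ∑ x, (∑ k, Real.sqrt (p k x))^2 ≤ (K:ℝ)^2 := by
      calc ∑ x, (∑ k, Real.sqrt (p k x))^2 ≤ ∑ x, (K:ℝ) * ∑ k, p k x :=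
            Finset.sum_le_sum fun x _ => hx x
        _ = (K:ℝ) * ∑ k, ∑ x, p k x := by rw [← Finset.mul_sum, Finset.sum_comm]
        _ = (K:ℝ)^2 := by simp [hsum]; ring
    linarith
  · -- upper bound
    rcases isEmpty_or_nonempty X with hX | hX
    · -- X empty forces K = 0
      have hK : K = 0 := by
        by_contra h
        have k0 : Fin K := ⟨0, Nat.pos_of_ne_zero h⟩
        have := hsum k0
        simp at this
      subst hK
      simp
    · obtain ⟨m, hmsum, hmle⟩ := point_mass_lemma K (fun _ => 0) (fun _ => le_refl 0)
        (fun k x => Real.sqrt (p k x)) (fun k x => Real.sqrt_nonneg _)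
        (fun k => by simp only [hsq]; exact hsum k)
      simp only [zero_add] at hmle
      have hcount := count_lemma K m hmsum
      have hchain : (Fintype.card X : ℝ) * ((K / Fintype.card X : ℕ) : ℝ)^2
          + (2 * ((K / Fintype.card X : ℕ) : ℝ) + 1) * ((K % Fintype.card X : ℕ) : ℝ)
          ≤ ∑ x, (∑ k, Real.sqrt (p k x))^2 := le_trans hcount hmle
      have hdm : (Fintype.card X : ℝ) * ((K / Fintype.card X : ℕ) : ℝ)
          + ((K % Fintype.card X : ℕ) : ℝ) = (K:ℝ) := by
        exact_mod_cast Nat.div_add_mod K (Fintype.card X)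
      nlinarith [hchain, hdm]
end

section
/- For two independent Bernoulli distributions with parameters q_1 and q_2, the minimum over product distributions with identical marginals of the KL divergence from the product p_{q_1}⊗p_{q_2} equals 2H_2((q_1+q_2)/2) − H_2(q_1) − H_2(q_2), where H_2 is the binary entropy. -/
open Finset

/-- The Bernoulli(q) probability mass function on `Bool`. -/
def bern (q : ℝ) : Bool → ℝ := fun b => if b then q else 1 - q

/-- Binary entropy function (base-2 logarithm). -/
noncomputable def H2 (q : ℝ) : ℝ :=
  -(q * Real.logb 2 q) - (1 - q) * Real.logb 2 (1 - q)

/-- KL divergence (in bits) of the product `Bern(q₁) ⊗ Bern(q₂)` from `Bern(r) ⊗ Bern(r)`. -/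
noncomputable def klJoint (q₁ q₂ r : ℝ) : ℝ :=
  ∑ a : Bool, ∑ b : Bool,
    bern q₁ a * bern q₂ b *
      Real.logb 2 ((bern q₁ a * bern q₂ b) / (bern r a * bern r b))

/-!
Expanding the logarithms, the divergence from `Bern(r) ⊗ Bern(r)` is `2 H(m, r) − H₂(q₁) − H₂(q₂)`,
where `m = (q₁ + q₂) / 2` and `H(m, r)` is the binary cross entropy. By Gibbs' inequality
`H(m, r) ≥ H(m, m) = H₂(m)`, so the minimum is attained at `r = m`.
-/

open Real

noncomputable def binCrossEntropy (p r : ℝ) : ℝ :=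
  -(p * logb 2 r) - (1 - p) * logb 2 (1 - r)

lemma binCrossEntropy_self (p : ℝ) : binCrossEntropy p p = H2 p := rfl

lemma concaveOn_logb {b : ℝ} (hb : 1 ≤ b) : ConcaveOn ℝ (Set.Ioi 0) (logb b) := by
  refine (strictConcaveOn_log_Ioi.concaveOn.smul (inv_nonneg.2 (log_nonneg hb))).congr ?_
  exact fun x _ ↦ inv_mul_eq_div _ _

lemma H2_le_binCrossEntropy {p r : ℝ} (hp : p ∈ Set.Ioo 0 1) (hr : r ∈ Set.Ioo 0 1) :
    H2 p ≤ binCrossEntropy p r := by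
  obtain ⟨hp0, hp1⟩ := hp
  obtain ⟨hr0, hr1⟩ := hr
  have hq : 0 < 1 - p := sub_pos.2 hp1
  have hs : 0 < 1 - r := sub_pos.2 hr1
  -- Jensen at the likelihood ratios `r / p` and `(1 - r) / (1 - p)`, whose `p`-mean is `1`.
  have jensen := (concaveOn_logb one_le_two).2 (Set.mem_Ioi.2 (div_pos hr0 hp0))
    (Set.mem_Ioi.2 (div_pos hs hq)) hp0.le hq.le (add_sub_cancel p 1)
  have mean : p • (r / p) + (1 - p) • ((1 - r) / (1 - p)) = 1 := by
    simp only [smul_eq_mul]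
    field_simp
    ring
  rw [mean, logb_one, smul_eq_mul, smul_eq_mul, logb_div hr0.ne' hp0.ne',
    logb_div hs.ne' hq.ne'] at jensen
  unfold H2 binCrossEntropy
  linarith

lemma mul_logb_div_mul {x y c d : ℝ} (hc : c ≠ 0) (hd : d ≠ 0) :
    x * y * logb 2 (x * y / (c * d)) =
      x * y * (logb 2 x + logb 2 y - logb 2 c - logb 2 d) := by
  rcases eq_or_ne x 0 with rfl | hx
  · simp
  rcases eq_or_ne y 0 with rfl | hy
  · simp
  rw [logb_div (mul_ne_zero hx hy) (mul_ne_zero hc hd), logb_mul hx hy, logb_mul hc hd]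
  ring

lemma klJoint_eq {r : ℝ} (q₁ q₂ : ℝ) (hr0 : r ≠ 0) (hr1 : r ≠ 1) :
    klJoint q₁ q₂ r = 2 * binCrossEntropy ((q₁ + q₂) / 2) r - H2 q₁ - H2 q₂ := by
  have hs : 1 - r ≠ 0 := sub_ne_zero.2 hr1.symm
  simp only [klJoint, bern, Fintype.sum_bool, if_true, Bool.false_eq_true, if_false]
  rw [mul_logb_div_mul hr0 hr0, mul_logb_div_mul hr0 hs, mul_logb_div_mul hs hr0,
    mul_logb_div_mul hs hs]
  unfold binCrossEntropy H2
  ring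

/-- The minimum over product distributions with identical marginals `r₁ = r₂ = r` of the
KL divergence from `Bern(q₁) ⊗ Bern(q₂)` equals `2H₂((q₁+q₂)/2) − H₂(q₁) − H₂(q₂)`. -/
theorem stmt5 (q₁ q₂ : ℝ) (h₁ : q₁ ∈ Set.Ioo (0:ℝ) 1) (h₂ : q₂ ∈ Set.Ioo (0:ℝ) 1) :
    IsLeast {v : ℝ | ∃ r ∈ Set.Ioo (0:ℝ) 1, v = klJoint q₁ q₂ r}
      (2 * H2 ((q₁ + q₂) / 2) - H2 q₁ - H2 q₂) := by
  have hm : (q₁ + q₂) / 2 ∈ Set.Ioo 0 1 := ⟨by linarith [h₁.1, h₂.1], by linarith [h₁.2, h₂.2]⟩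
  refine ⟨⟨_, hm, ?_⟩, ?_⟩
  · rw [klJoint_eq q₁ q₂ hm.1.ne' hm.2.ne, binCrossEntropy_self]
  · rintro v ⟨r, hr, rfl⟩
    rw [klJoint_eq q₁ q₂ hr.1.ne' hr.2.ne]
    linarith [H2_le_binCrossEntropy hm hr]
end

section
/- Let K ≥ 4 (so that there are at least two non-colluding indices) and L ≤ K−2. Let I = {1,2}, and for k ∈ I let (R_{k,l})_{l ∈ {1,...,K}, l≠k} be mutually independent uniform random variables on ℤ_M with R_{k,k} = −⊕_{l≠k} R_{k,l}. Then for any values r of (R_{k,l})_{k∈I, l∈L} and any σ = (σ_j)_{j∈K∖L} in ℤ_M^{K−L}, the conditional probability P(⊕_{k∈I} R_{k,j} = σ_j for all j ∈ K∖L | (R_{k,l})_{k∈I,l∈L} = r) equals M^{−(K−L−1)} times the indicator that Σ_{j∈K∖L} σ_j ⊕ Σ_{l∈L} (R_{1,l}⊕R_{2,l}) = 0 mod M. -/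
/-!
Let `X` be the vector of the `2K - 2` off-diagonal entries `R k l`, `l ≠ k`; it is uniform on
`ℤ_M ^ (2K - 2)`, so its law is preserved by every bijection of that finite set. Since both rows
of `R` sum to zero, so does `R 0 + R 1`; hence, on the conditioning event, the constraints
`R 0 j + R 1 j = σ j` (`j ∉ ℒ`) force the consistency condition, and given it the constraint at
`j = 0` is redundant. After the injective change of variables that adds row `1` (with its
diagonal entry recovered from the zero row sum) to row `0`, the remaining constraints fix
`K - 1 + L` coordinates, while the conditioning event fixes `2L`. The conditional probability is
therefore `M ^ (2L - (K - 1 + L)) = M ^ (-(K - L - 1))`.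
-/

open MeasureTheory ProbabilityTheory Finset

noncomputable instance {M : ℕ} : MeasurableSpace (ZMod M) := ⊤

section UniformFamily

variable {Ω ι α : Type*} [MeasurableSpace Ω] {μ : Measure Ω} [MeasurableSpace α]
  [MeasurableSingletonClass α] {X : ι → Ω → α}

theorem measurableSet_forall_mem_eq (hmeas : ∀ i, Measurable (X i)) (Q : Finset ι) (c : ι → α) :
    MeasurableSet {ω | ∀ i ∈ Q, X i ω = c i} := by
  simp only [Set.ofPred_forall]
  exact Q.measurableSet_biInter fun i _ => hmeas i (measurableSet_singleton (c i))

variable [Fintype α] [Nonempty α]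

theorem measure_forall_mem_eq_of_iIndepFun_uniform (hX : iIndepFun X μ)
    (hmeas : ∀ i, Measurable (X i))
    (hunif : ∀ i, μ.map (X i) = (PMF.uniformOfFintype α).toMeasure)
    (Q : Finset ι) (c : ι → α) :
    μ {ω | ∀ i ∈ Q, X i ω = c i} = (Fintype.card α : ENNReal)⁻¹ ^ #Q := by
  have hset : {ω | ∀ i ∈ Q, X i ω = c i} = ⋂ i ∈ Q, X i ⁻¹' {c i} := by
    ext; simp
  rw [hset, hX.measure_inter_preimage_eq_mul Q fun i _ => measurableSet_singleton (c i),
    prod_congr rfl fun i _ => ?_, prod_const]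
  rw [← Measure.map_apply (hmeas i) (measurableSet_singleton _), hunif,
    PMF.toMeasure_apply_singleton _ _ (measurableSet_singleton _), PMF.uniformOfFintype_apply]

theorem measure_preimage_of_iIndepFun_uniform [Fintype ι] (hX : iIndepFun X μ)
    (hmeas : ∀ i, Measurable (X i))
    (hunif : ∀ i, μ.map (X i) = (PMF.uniformOfFintype α).toMeasure) (S : Set (ι → α)) :
    μ ((fun ω i => X i ω) ⁻¹' S) = S.ncard * (Fintype.card α : ENNReal)⁻¹ ^ Fintype.card ι := by
  classical
  have hV : Measurable fun ω i => X i ω := measurable_pi_lambda _ hmeas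
  rw [← (Set.toFinite S).coe_toFinset, ← sum_measure_preimage_singleton _
    fun x _ => hV (measurableSet_singleton x), Set.ncard_coe_finset, ← nsmul_eq_mul,
    ← sum_const, sum_congr rfl fun x _ => ?_]
  have hpt : (fun ω i => X i ω) ⁻¹' {x} = {ω | ∀ i ∈ univ, X i ω = x i} := by
    ext; simp [funext_iff]
  rw [hpt, measure_forall_mem_eq_of_iIndepFun_uniform hX hmeas hunif, card_univ]

theorem measure_forall_mem_eq_comp_of_iIndepFun_uniform [Finite ι] (hX : iIndepFun X μ)
    (hmeas : ∀ i, Measurable (X i))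
    (hunif : ∀ i, μ.map (X i) = (PMF.uniformOfFintype α).toMeasure)
    {Φ : (ι → α) → ι → α} (hΦ : Function.Injective Φ) (Q : Finset ι) (c : ι → α) :
    μ {ω | ∀ i ∈ Q, Φ (fun j => X j ω) i = c i} = (Fintype.card α : ENNReal)⁻¹ ^ #Q := by
  have := Fintype.ofFinite ι
  have hΦ' : Function.Surjective Φ := Finite.injective_iff_surjective.mp hΦ
  set T : Set (ι → α) := {z | ∀ i ∈ Q, z i = c i}
  change μ ((fun ω j => X j ω) ⁻¹' (Φ ⁻¹' T)) = _
  rw [measure_preimage_of_iIndepFun_uniform hX hmeas hunif,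
    Set.ncard_preimage_of_injective_subset_range hΦ (by simp [hΦ'.range_eq]),
    ← measure_preimage_of_iIndepFun_uniform hX hmeas hunif]
  exact measure_forall_mem_eq_of_iIndepFun_uniform hX hmeas hunif Q c

end UniformFamily

theorem injective_add_of_dependsOn {ι G : Type*} [AddGroup G] {s : Set ι}
    {F : (ι → G) → ι → G} (hF : DependsOn F s) (hzero : ∀ x, ∀ i ∈ s, F x i = 0) :
    Function.Injective fun x => x + F x := by
  intro x y hxy
  have hs : ∀ i ∈ s, x i = y i := fun i hi => by
    simpa [hzero _ i hi] using congrFun hxy i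
  simpa [hF hs] using hxy

section TwoRows

variable {n G : Type*} [Fintype n] [DecidableEq n] [AddCommGroup G]

theorem eq_iff_forall_ne_and_sum_eq_zero {f τ : n → G} (hf : ∑ j, f j = 0) (j₀ : n) :
    f = τ ↔ (∀ j ≠ j₀, f j = τ j) ∧ ∑ j, τ j = 0 := by
  refine ⟨fun h => ⟨fun j _ => congrFun h j, h ▸ hf⟩, fun ⟨hne, hτ⟩ => funext fun j => ?_⟩
  by_cases hj : j = j₀
  · subst hj
    rw [← add_sum_erase _ _ (mem_univ j)] at hf hτ
    rw [sum_congr rfl fun i hi => hne i (ne_of_mem_erase hi)] at hf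
    exact add_right_cancel (hf.trans hτ.symm)
  · exact hne j hj

theorem eq_on_and_add_eq_on_compl_iff {R : Fin 2 → n → G} (hR : ∀ k, ∑ j, R k j = 0) (j₀ : n)
    (s : Finset n) (r : Fin 2 → n → G) (σ : n → G) :
    ((∀ k, ∀ l ∈ s, R k l = r k l) ∧ ∀ j ∈ sᶜ, R 0 j + R 1 j = σ j) ↔
      (∑ j ∈ sᶜ, σ j + ∑ l ∈ s, (r 0 l + r 1 l) = 0) ∧
        (∀ j ≠ j₀, R 0 j + R 1 j = s.piecewise (r 0 + r 1) σ j) ∧ ∀ l ∈ s, R 1 l = r 1 l := by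
  have hsum : ∑ j, (R 0 + R 1) j = 0 := by simp [sum_add_distrib, hR]
  have hpiece : ∑ j, s.piecewise (r 0 + r 1) σ j = ∑ j ∈ sᶜ, σ j + ∑ l ∈ s, (r 0 l + r 1 l) := by
    rw [sum_piecewise, univ_inter, ← compl_eq_univ_sdiff, add_comm]
    rfl
  have hsplit : ((∀ k, ∀ l ∈ s, R k l = r k l) ∧ ∀ j ∈ sᶜ, R 0 j + R 1 j = σ j) ↔
      R 0 + R 1 = s.piecewise (r 0 + r 1) σ ∧ ∀ l ∈ s, R 1 l = r 1 l := by
    constructor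
    · rintro ⟨hs, hsc⟩
      refine ⟨funext fun j => ?_, hs 1⟩
      by_cases hj : j ∈ s
      · simp [hj, hs 0 j hj, hs 1 j hj]
      · simp [hj, hsc j (mem_compl.2 hj)]
    · rintro ⟨h, h1⟩
      refine ⟨Fin.forall_fin_two.2 ⟨fun l hl => ?_, h1⟩, fun j hj => ?_⟩
      · simpa [hl, h1 l hl] using congrFun h l
      · simpa [mem_compl.1 hj] using congrFun h j
  rw [hsplit, eq_iff_forall_ne_and_sum_eq_zero hsum j₀, hpiece]
  simp only [Pi.add_apply]
  tauto

variable (e : Fin 2 → n)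

abbrev OffDiag : Type _ := {p : Fin 2 × n // p.2 ≠ e p.1}

def completeRow (x : OffDiag e → G) (k : Fin 2) (j : n) : G :=
  if h : j = e k then -∑ l : {l // l ≠ e k}, x ⟨(k, l), l.2⟩ else x ⟨(k, j), h⟩

theorem completeRow_of_ne (x : OffDiag e → G) {k : Fin 2} {j : n} (h : j ≠ e k) :
    completeRow e x k j = x ⟨(k, j), h⟩ :=
  dif_neg h

theorem eq_completeRow {R : Fin 2 → n → G}
    (hdiag : ∀ k, R k (e k) = -∑ l ∈ univ.erase (e k), R k l) (k : Fin 2) (j : n) :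
    R k j = completeRow e (fun p => R p.1.1 p.1.2) k j := by
  unfold completeRow
  split_ifs with h
  · subst h
    rw [hdiag, sum_subtype (p := (· ≠ e k)) _ fun l => by simp]
  · rfl

theorem sum_completeRow (x : OffDiag e → G) (k : Fin 2) : ∑ j, completeRow e x k j = 0 := by
  rw [← add_sum_erase _ _ (mem_univ (e k)), completeRow, dif_pos rfl, neg_add_eq_zero,
    sum_subtype (p := (· ≠ e k)) _ fun l => by simp]
  exact sum_congr rfl fun l _ => (completeRow_of_ne e x l.2).symm

theorem dependsOn_completeRow (k : Fin 2) :
    DependsOn (fun x : OffDiag e → G => completeRow e x k) {p | p.1.1 = k} := by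
  intro x y h
  funext j
  show completeRow e x k j = completeRow e y k j
  unfold completeRow
  split_ifs
  · exact congrArg Neg.neg (sum_congr rfl fun l _ => h _ rfl)
  · exact h _ rfl

def addRowOneToZero (x : OffDiag e → G) : OffDiag e → G :=
  x + fun p => if p.1.1 = 0 then completeRow e x 1 p.1.2 else 0

theorem addRowOneToZero_injective : Function.Injective (addRowOneToZero (G := G) e) := by
  refine injective_add_of_dependsOn (s := {p | p.1.1 = 1}) (fun x y h => ?_) fun x p hp => ?_
  · simp only [show completeRow e x 1 = completeRow e y 1 from dependsOn_completeRow e 1 h]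
  · simp [Set.mem_ofPred_eq.mp hp]

theorem forall_mem_addRowOneToZero_iff {s : Finset n} (hs : e 1 ∉ s) (x : OffDiag e → G)
    (t : Fin 2 → n → G) :
    (∀ p ∈ ({p : OffDiag e | p.1.1 = 0 ∨ p.1.2 ∈ s} : Finset _),
        addRowOneToZero e x p = t p.1.1 p.1.2) ↔
      (∀ j ≠ e 0, completeRow e x 0 j + completeRow e x 1 j = t 0 j) ∧
        ∀ l ∈ s, completeRow e x 1 l = t 1 l := by
  simp only [mem_filter_univ, Subtype.forall, Prod.forall, Fin.forall_fin_two, addRowOneToZero,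
    Pi.add_apply, true_or, one_ne_zero, false_or, if_true, if_false, add_zero, true_implies]
  refine and_congr (forall_congr' fun j => forall_congr' fun hj => ?_)
    ⟨fun h l hl => ?_, fun h l hl1 hl => ?_⟩
  · rw [completeRow_of_ne e x hj]
  · rw [completeRow_of_ne e x (ne_of_mem_of_not_mem hl hs)]
    exact h l _ hl
  · rw [← completeRow_of_ne e x hl1]
    exact h l hl

theorem card_filter_offDiag (P : Fin 2 × n → Prop) [DecidablePred P] :
    #{p : OffDiag e | P p.1} = #{j | j ≠ e 0 ∧ P (0, j)} + #{j | j ≠ e 1 ∧ P (1, j)} := by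
  have : ({p : OffDiag e | P p.1} : Finset _).map (Function.Embedding.subtype _)
      = ({q : Fin 2 × n | q.2 ≠ e q.1 ∧ P q} : Finset _) := by
    ext q; simp [and_comm]
  rw [← card_map, this, card_filter, Fintype.sum_prod_type, Fin.sum_univ_two, card_filter,
    card_filter]

theorem filter_ne_and_mem_eq {s : Finset n} {k : Fin 2} (hs : e k ∉ s) :
    ({j | j ≠ e k ∧ j ∈ s} : Finset n) = s := by
  ext j
  simpa using fun hj => ne_of_mem_of_not_mem hj hs

theorem card_filter_snd_mem {s : Finset n} (hs : ∀ k, e k ∉ s) :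
    #{p : OffDiag e | p.1.2 ∈ s} = 2 * #s := by
  rw [card_filter_offDiag e (·.2 ∈ s), filter_ne_and_mem_eq e (hs 0),
    filter_ne_and_mem_eq e (hs 1), two_mul]

theorem card_filter_fst_eq_zero_or_snd_mem {s : Finset n} (hs : e 1 ∉ s) :
    #{p : OffDiag e | p.1.1 = 0 ∨ p.1.2 ∈ s} = (Fintype.card n - 1) + #s := by
  rw [card_filter_offDiag e (fun q => q.1 = 0 ∨ q.2 ∈ s)]
  simp only [true_or, and_true, one_ne_zero, false_or]
  rw [filter_ne_and_mem_eq e hs, filter_ne', card_erase_of_mem (mem_univ _), card_univ]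

variable {Ω : Type*}

theorem setOf_forall_mem_eq_eq_filter {β : Type*} {s : Finset n} (hs : ∀ k, e k ∉ s)
    (R : Fin 2 → n → Ω → β) (r : Fin 2 → n → β) :
    {ω | ∀ k, ∀ l ∈ s, R k l ω = r k l}
      = {ω | ∀ p ∈ ({p : OffDiag e | p.1.2 ∈ s} : Finset _), R p.1.1 p.1.2 ω = r p.1.1 p.1.2} := by
  ext ω
  simp only [Set.mem_ofPred_eq, mem_filter_univ, Subtype.forall, Prod.forall]
  exact forall_congr' fun k =>
    ⟨fun h l _ hl => h l hl, fun h l hl => h l (ne_of_mem_of_not_mem hl (hs k)) hl⟩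

theorem setOf_inter_setOf_add_eq {s : Finset n} (hs : e 1 ∉ s) {R : Fin 2 → n → Ω → G}
    (hdiag : ∀ k ω, R k (e k) ω = -∑ l ∈ univ.erase (e k), R k l ω)
    (r : Fin 2 → n → G) (σ : n → G) :
    {ω | ∀ k, ∀ l ∈ s, R k l ω = r k l} ∩ {ω | ∀ j ∈ sᶜ, R 0 j ω + R 1 j ω = σ j}
      = {ω | (∑ j ∈ sᶜ, σ j + ∑ l ∈ s, (r 0 l + r 1 l) = 0) ∧
          ∀ p ∈ ({p : OffDiag e | p.1.1 = 0 ∨ p.1.2 ∈ s} : Finset _),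
            addRowOneToZero e (fun p => R p.1.1 p.1.2 ω) p
              = ![s.piecewise (r 0 + r 1) σ, r 1] p.1.1 p.1.2} := by
  ext ω
  have hrow := eq_completeRow e (R := (R · · ω)) fun k => hdiag k ω
  have hsum : ∀ k, ∑ j, R k j ω = 0 := fun k =>
    (sum_congr rfl fun j _ => hrow k j).trans (sum_completeRow e _ k)
  rw [Set.mem_inter_iff, Set.mem_ofPred_eq, Set.mem_ofPred_eq, Set.mem_ofPred_eq,
    eq_on_and_add_eq_on_compl_iff hsum (e 0), forall_mem_addRowOneToZero_iff e hs]
  simp only [← hrow]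
  rfl

end TwoRows

/-- Lemma 1 of the paper.  Let `K ≥ 4`, `L ≤ K − 2`, let `ℒ` be the set of colluding
indices (of size `L`, not containing the two indices `I = {0,1}`), and for `k ∈ I`
let `(R_{k,l})_{l ≠ k}` be mutually independent uniform random variables on `ℤ_M`,
with `R_{k,k} = −⊕_{l ≠ k} R_{k,l}`.  Then conditionally on the values
`(R_{k,l})_{k ∈ I, l ∈ ℒ} = r`, the probability that `R_{0,j} ⊕ R_{1,j} = σ_j` for all
`j ∉ ℒ` equals `M^{−(K−L−1)}` times the indicator that
`∑_{j ∉ ℒ} σ_j ⊕ ∑_{l ∈ ℒ} (r_{0,l} ⊕ r_{1,l}) = 0`. -/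
theorem stmt8 {Ω : Type*} [MeasurableSpace Ω] (μ : Measure Ω)
    (Mo K L : ℕ) [NeZero Mo] (hK : 4 ≤ K) (hL : L ≤ K - 2)
    (ℒ : Finset (Fin K)) (hcard : ℒ.card = L)
    (hI : ∀ k : Fin 2, Fin.castLE (by omega : 2 ≤ K) k ∉ ℒ)
    (R : Fin 2 → Fin K → Ω → ZMod Mo)
    (hmeas : ∀ k l, Measurable (R k l))
    (hindep : iIndepFun
      (fun p : {p : Fin 2 × Fin K // p.2 ≠ Fin.castLE (by omega : 2 ≤ K) p.1} =>
        R p.1.1 p.1.2) μ)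
    (hunif : ∀ (k : Fin 2) (l : Fin K), l ≠ Fin.castLE (by omega : 2 ≤ K) k →
      μ.map (R k l) = (PMF.uniformOfFintype (ZMod Mo)).toMeasure)
    (hdiag : ∀ (k : Fin 2) (ω : Ω),
      R k (Fin.castLE (by omega : 2 ≤ K) k) ω
        = - ∑ l ∈ Finset.univ.erase (Fin.castLE (by omega : 2 ≤ K) k), R k l ω)
    (r : Fin 2 → Fin K → ZMod Mo) (σ : Fin K → ZMod Mo) :
    (μ[|{ω | ∀ (k : Fin 2), ∀ l ∈ ℒ, R k l ω = r k l}])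
        {ω | ∀ j ∈ ℒᶜ, R 0 j ω + R 1 j ω = σ j}
      = ((Mo : ENNReal))⁻¹ ^ (K - L - 1) *
          (if (∑ j ∈ ℒᶜ, σ j) + (∑ l ∈ ℒ, (r 0 l + r 1 l)) = 0 then 1 else 0) := by
  classical
  have hK2 : 2 ≤ K := by omega
  set e : Fin 2 → Fin K := Fin.castLE hK2
  have hX := fun p : OffDiag e => hmeas p.1.1 p.1.2
  have hXunif := fun p : OffDiag e => hunif p.1.1 p.1.2 p.2
  rw [cond_apply (setOf_forall_mem_eq_eq_filter e hI R r ▸ measurableSet_forall_mem_eq hX _ _),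
    setOf_inter_setOf_add_eq e (hI 1) hdiag, setOf_forall_mem_eq_eq_filter e hI,
    measure_forall_mem_eq_of_iIndepFun_uniform hindep hX hXunif, card_filter_snd_mem e hI,
    ZMod.card, hcard]
  by_cases hcons : ∑ j ∈ ℒᶜ, σ j + ∑ l ∈ ℒ, (r 0 l + r 1 l) = 0
  · simp only [hcons, true_and, if_true, mul_one]
    rw [measure_forall_mem_eq_comp_of_iIndepFun_uniform hindep hX hXunif
      (addRowOneToZero_injective e), card_filter_fst_eq_zero_or_snd_mem e (hI 1), ZMod.card,
      Fintype.card_fin, hcard, show K - 1 + L = 2 * L + (K - L - 1) by omega, pow_add,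
      ENNReal.inv_mul_cancel_left (by simp) (by simp [NeZero.ne Mo])]
  · simp [hcons]
end

section
/- Let Q̃_1,...,Q̃_K be probability distributions on a finite alphabet X, and let Q_k(x) be m-bit fixed-point approximations satisfying |√(Q̃_k(x)) − Q_k(x)| ≤ 2^{−m−1} and 0 ≤ Q_k(x) < 1 for all k, x. Then |d(Q̃_1,...,Q̃_K) − (K² − Σ_{x∈X}(Σ_{k=1}^K Q_k(x))²)| ≤ 2^{−m} K² |X|, where d is the Hellinger diameter. -/
open Finset

/-- If `Q̃₁,…,Q̃_K` are probability distributions on a finite alphabet `X` and each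
`Q_k(x) ∈ [0,1)` approximates `√(Q̃_k(x))` to within `2^{−m−1}`, then the Hellinger
diameter `d(Q̃₁,…,Q̃_K) = K² − ∑_x (∑_k √(Q̃_k x))²` differs from the quantized statistic
`K² − ∑_x (∑_k Q_k x)²` by at most `2^{−m} K² |X|`. -/
theorem stmt12 {X : Type*} [Fintype X] (K m : ℕ)
    (Qt : Fin K → X → ℝ) (Q : Fin K → X → ℝ)
    (hnn : ∀ k x, 0 ≤ Qt k x) (hsum : ∀ k, ∑ x, Qt k x = 1)
    (hQ : ∀ k x, 0 ≤ Q k x ∧ Q k x < 1)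
    (happrox : ∀ k x, |Real.sqrt (Qt k x) - Q k x| ≤ (2:ℝ) ^ (-(m:ℤ) - 1)) :
    |((K : ℝ)^2 - ∑ x, (∑ k, Real.sqrt (Qt k x))^2)
        - ((K : ℝ)^2 - ∑ x, (∑ k, Q k x)^2)|
      ≤ (2:ℝ) ^ (-(m:ℤ)) * (K : ℝ)^2 * (Fintype.card X : ℝ) := by
  have key : ∀ x : X,
      |(∑ k, Real.sqrt (Qt k x))^2 - (∑ k, Q k x)^2|
        ≤ (2:ℝ) ^ (-(m:ℤ)) * (K : ℝ)^2 := by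
    intro x
    set A := ∑ k, Real.sqrt (Qt k x) with hA
    set B := ∑ k, Q k x with hB
    have hAK : A ≤ K := by
      calc A ≤ ∑ _k : Fin K, (1:ℝ) := by
              apply Finset.sum_le_sum
              intro k _
              have h1 : Qt k x ≤ 1 := by
                have := Finset.single_le_sum (f := fun y => Qt k y)
                  (fun y _ => hnn k y) (Finset.mem_univ x)
                linarith [hsum k]
              calc Real.sqrt (Qt k x) ≤ Real.sqrt 1 :=
                    Real.sqrt_le_sqrt h1
                _ = 1 := Real.sqrt_one
        _ = K := by simp
    have hA0 : 0 ≤ A := Finset.sum_nonneg fun k _ => Real.sqrt_nonneg _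
    have hBK : B ≤ K := by
      calc B ≤ ∑ _k : Fin K, (1:ℝ) :=
              Finset.sum_le_sum fun k _ => le_of_lt (hQ k x).2
        _ = K := by simp
    have hB0 : 0 ≤ B := Finset.sum_nonneg fun k _ => (hQ k x).1
    have hAB : |A - B| ≤ (K:ℝ) * (2:ℝ) ^ (-(m:ℤ) - 1) := by
      calc |A - B| = |∑ k, (Real.sqrt (Qt k x) - Q k x)| := by
            rw [hA, hB, Finset.sum_sub_distrib]
        _ ≤ ∑ k, |Real.sqrt (Qt k x) - Q k x| := Finset.abs_sum_le_sum_abs _ _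
        _ ≤ ∑ _k : Fin K, (2:ℝ) ^ (-(m:ℤ) - 1) :=
            Finset.sum_le_sum fun k _ => happrox k x
        _ = (K:ℝ) * (2:ℝ) ^ (-(m:ℤ) - 1) := by simp [mul_comm]
    have habs : |A + B| ≤ 2 * (K:ℝ) := by
      rw [abs_of_nonneg (by linarith)]; linarith
    have : |A^2 - B^2| = |A - B| * |A + B| := by
      rw [← abs_mul]; ring_nf
    rw [this]
    have hpow : (2:ℝ) ^ (-(m:ℤ) - 1) * 2 = (2:ℝ) ^ (-(m:ℤ)) := by
      rw [← zpow_add_one₀ (by norm_num : (2:ℝ) ≠ 0)]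
      ring_nf
    calc |A - B| * |A + B| ≤ ((K:ℝ) * (2:ℝ) ^ (-(m:ℤ) - 1)) * (2 * (K:ℝ)) := by
          apply mul_le_mul hAB habs (abs_nonneg _)
          positivity
      _ = (2:ℝ) ^ (-(m:ℤ)) * (K:ℝ)^2 := by
          rw [← hpow]; ring
  calc |((K : ℝ)^2 - ∑ x, (∑ k, Real.sqrt (Qt k x))^2)
        - ((K : ℝ)^2 - ∑ x, (∑ k, Q k x)^2)|
      = |∑ x, ((∑ k, Real.sqrt (Qt k x))^2 - (∑ k, Q k x)^2)| := by
        rw [Finset.sum_sub_distrib, sub_sub_sub_cancel_left, abs_sub_comm]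
    _ ≤ ∑ x, |(∑ k, Real.sqrt (Qt k x))^2 - (∑ k, Q k x)^2| :=
        Finset.abs_sum_le_sum_abs _ _
    _ ≤ ∑ _x : X, (2:ℝ) ^ (-(m:ℤ)) * (K : ℝ)^2 :=
        Finset.sum_le_sum fun x _ => key x
    _ = (2:ℝ) ^ (-(m:ℤ)) * (K : ℝ)^2 * (Fintype.card X : ℝ) := by
        simp [mul_comm]
end
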